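/- For any two Lyndon words s and r over {0,1} of length at least 2, the lexicographically largest cyclic rotation of s • r equals s • L(r), i.e., L(s • r) = s • L(r). -/

import Mathlib

/-- The cyclic rotation of a binary word `c` by `i`: `c_{i+1}…c_m c_1…c_i`. -/
def rot (c : List Bool) (i : ℕ) : List Bool := c.drop i ++ c.take i

/-- The lexicographically largest cyclic rotation `L(s)` of `s`. -/
def maxRot (s : List Bool) : List Bool :=
  (List.range s.length).foldl (fun acc i => max acc (rot s i)) s

/-- The lexicographically smallest cyclic rotation `S(s)` of `s`. -/
def minRot (s : List Bool) : List Bool :=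
  (List.range s.length).foldl (fun acc i => min acc (rot s i)) s

/-- A binary word is Lyndon if every proper suffix is strictly lexicographically
greater than the prefix of the same length. -/
def IsLyndon (s : List Bool) : Prop :=
  ∀ i, 0 < i → i < s.length → s.take (s.length - i) < s.drop i

/-- The block emitted by the substitution `Φ_s` (with `a = L(s)`) for a pair of
consecutive digits: `00 ↦ a`, `01 ↦ a⁺`, `10 ↦ s⁻`, `11 ↦ s`. -/
def blk (s a : List Bool) : Bool → Bool → List Bool
  | false, false => a
  | false, true  => a.dropLast ++ [true]
  | true,  false => s.dropLast ++ [false]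
  | true,  true  => s

/-- The substitution `Φ_s` on infinite sequences: the first block is `s⁻` if `r 0 = 0`
and `L(s)⁺` if `r 0 = 1`; block `j+1` is determined by the pair `(r j, r (j+1))`. -/
def subst (s : List Bool) (r : ℕ → Bool) : ℕ → Bool := fun n =>
  let m := s.length
  let j := n / m
  (if j = 0 then blk s (maxRot s) (!(r 0)) (r 0)
   else blk s (maxRot s) (r (j - 1)) (r j)).getD (n % m) false

/-- The substitution `s • r` on finite words. -/
def substWord (s : List Bool) (r : List Bool) : List Bool :=
  match r with
  | [] => []
  | c :: _ =>
      blk s (maxRot s) (!c) c ++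
        ((r.zip r.tail).map fun p => blk s (maxRot s) p.1 p.2).flatten

/-!
Write `a = L(s)` and `a⁺` for `a` with its final `0` raised to `1`. Let `codeWord s w` replace
each letter `c` of `w` by `c` followed by the first `|s| - 1` letters of `s` (if `c = 1`) or of
`a` (if `c = 0`). Rotating `w` by one letter rotates `codeWord s w` by `|s|` letters, and if `w`
starts and ends with different letters, `s • w` is a rotation of `codeWord s w`. A Lyndon word
`r` starts with `0` and ends with `1`, and `L(r)` the other way round, so `s • r` and `s • L(r)`
are rotations of the same word, and it remains to bound every rotation of `codeWord s r` by
`s • L(r)`, which begins with `a⁺`.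

The first `|s|` letters of such a rotation are a rotation of `s` (hence `≤ a < a⁺`), or lie
below such a rotation, or, where a block `0` is followed by a block `1`, are a suffix of `a⁺`
followed by a prefix of `s`. In the last case they are still `< a⁺`, because `a`, being
strictly larger than its other rotations, has each proper suffix smaller than the prefix of the
same length. The one exception is when these letters are `a⁺` itself; there the comparison
reduces, by monotonicity of `codeWord s`, to a rotation of `r` being at most `L(r)`.
-/

namespace List

section LinearOrder

variable {α : Type*} [LinearOrder α]

theorem append_lt_append_of_lt_of_length_eq {x y : List α} (u v : List α)
    (hl : x.length = y.length) (hxy : x < y) : x ++ u < y ++ v := by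
  induction x generalizing y with
  | nil => cases y <;> simp_all
  | cons a x ih =>
    obtain ⟨b, y, rfl⟩ := exists_cons_of_length_eq_add_one hl.symm
    cases hxy with
    | rel hab => exact Lex.rel hab
    | cons hxy => exact Lex.cons (ih (by simpa using hl) hxy)

theorem append_lt_append_of_length_eq {x y u v : List α} (hl : x.length = y.length)
    (hxy : x ≤ y) (huv : u < v) : x ++ u < y ++ v := by
  rcases hxy.lt_or_eq with hxy | rfl
  · exact append_lt_append_of_lt_of_length_eq u v hl hxy
  · exact append_left_lt huv

theorem append_le_append_of_length_eq {x y u v : List α} (hl : x.length = y.length)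
    (hxy : x ≤ y) (huv : u ≤ v) : x ++ u ≤ y ++ v := by
  rcases huv.lt_or_eq with huv | rfl
  · exact (append_lt_append_of_length_eq hl hxy huv).le
  · rcases hxy.lt_or_eq with hxy | rfl
    · exact (append_lt_append_of_lt_of_length_eq u u hl hxy).le
    · exact le_rfl

theorem le_of_append_le_append_of_length_eq {x y u v : List α} (hl : x.length = y.length)
    (h : x ++ u ≤ y ++ v) : x ≤ y :=
  not_lt.1 fun hyx => h.not_gt (append_lt_append_of_lt_of_length_eq v u hl.symm hyx)

theorem lt_or_eq_and_lt_of_append_lt_append {x y u v : List α} (hl : x.length = y.length)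
    (h : x ++ u < y ++ v) : x < y ∨ x = y ∧ u < v := by
  rcases (le_of_append_le_append_of_length_eq hl h.le).lt_or_eq with hxy | rfl
  · exact Or.inl hxy
  · refine Or.inr ⟨rfl, not_le.1 fun hvu => h.not_ge ?_⟩
    exact append_le_append_of_length_eq rfl le_rfl hvu

theorem drop_lt_take_of_forall_rotate_lt {A : List α}
    (hA : ∀ j, 0 < j → j < A.length → A.rotate j < A) {i : ℕ} (h0 : 0 < i)
    (hi : i < A.length) : A.drop i < A.take (A.length - i) := by
  have hsplit : ∀ j, 0 < j → j < A.length → A.drop j < A.take (A.length - j) ∨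
      A.drop j = A.take (A.length - j) ∧ A.take j < A.drop (A.length - j) := by
    intro j hj0 hj
    have h := hA j hj0 hj
    rw [rotate_eq_drop_append_take hj.le] at h
    conv_rhs at h => rw [← take_append_drop (A.length - j) A]
    exact lt_or_eq_and_lt_of_append_lt_append (by simp) h
  rcases hsplit i h0 hi with h | ⟨-, hlt⟩
  · exact h
  -- a border of length `|A| - i` makes the rotations by `i` and by `|A| - i` contradict
  have hcompl := hsplit (A.length - i) (by omega) (by omega)
  rw [Nat.sub_sub_self hi.le] at hcompl
  rcases hcompl with h | ⟨heq, -⟩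
  · exact absurd hlt (lt_asymm h)
  · exact absurd hlt (heq ▸ lt_irrefl _)

end LinearOrder

theorem append_true_le_of_append_false_lt {x y : List Bool} (hl : y.length = x.length + 1)
    (h : x ++ [false] < y) : x ++ [true] ≤ y := by
  obtain ⟨y, b, rfl⟩ : ∃ y' b, y = y' ++ [b] :=
    ⟨y.dropLast, y.getLast (by rintro rfl; simp at hl), (dropLast_append_getLast _).symm⟩
  have hl' : x.length = y.length := by simpa using hl.symm
  rcases lt_or_eq_and_lt_of_append_lt_append hl' h with hxy | ⟨rfl, hb⟩
  · exact (append_lt_append_of_lt_of_length_eq _ _ hl' hxy).le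
  · obtain rfl : b = true := by
      cases hb with
      | rel hb => exact (Bool.lt_iff.1 hb).2
      | cons hb => simp at hb
    exact le_rfl

theorem exists_eq_cons_append_singleton {α : Type*} {l : List α} (h : 2 ≤ l.length) :
    ∃ x w y, l = x :: w ++ [y] := by
  obtain ⟨x, l, rfl⟩ :=
    exists_cons_of_length_eq_add_one (by omega : l.length = l.length - 1 + 1)
  have hl : l ≠ [] := by rintro rfl; simp at h
  exact ⟨x, l.dropLast, l.getLast hl, by simp [dropLast_append_getLast hl]⟩

theorem rotate_flatten_map_mul {α β : Type*} {f : α → List β} {m : ℕ}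
    (hf : ∀ a, (f a).length = m) (w : List α) (q : ℕ) :
    (w.map f).flatten.rotate (q * m) = ((w.rotate q).map f).flatten := by
  induction q generalizing w with
  | zero => simp
  | succ q ih =>
    rw [Nat.succ_mul, ← rotate_rotate, ih, ← rotate_rotate w q 1]
    rcases w.rotate q with _ | ⟨a, w⟩
    · simp
    · rw [map_cons, flatten_cons, ← hf a, rotate_append_length_eq]
      simp

theorem exists_rotate_eq_rotate_mul_add_one {α : Type*} (l : List α) {m : ℕ} (hm : 0 < m)
    (j : ℕ) : ∃ q, ∃ t < m, l.rotate j = (l.rotate (q * m)).rotate (t + 1) := by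
  rcases eq_or_ne l [] with rfl | hl
  · exact ⟨0, 0, hm, by simp⟩
  have hlen := length_pos_iff.2 hl
  obtain ⟨q, t, ht, hqt⟩ : ∃ q, ∃ t < m, q * m + (t + 1) = j + l.length := by
    refine ⟨(j + l.length - 1) / m, (j + l.length - 1) % m, Nat.mod_lt _ hm, ?_⟩
    have := Nat.div_add_mod (j + l.length - 1) m
    rw [Nat.mul_comm]
    omega
  refine ⟨q, t, ht, ?_⟩
  rw [rotate_rotate, hqt, ← rotate_mod l (j + _), Nat.add_mod_right, rotate_mod]

end List

theorem rot_eq_rotate {c : List Bool} {i : ℕ} (h : i ≤ c.length) : rot c i = c.rotate i :=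
  (List.rotate_eq_drop_append_take h).symm

theorem isGreatest_maxRot (s : List Bool) : IsGreatest {t | s ~r t} (maxRot s) := by
  have hmax : (s :: (List.range s.length).map (rot s)).max? = some (maxRot s) := by
    rw [List.max?_cons', maxRot, List.foldl_map]
  obtain ⟨hmem, hle⟩ := List.max?_eq_some_iff.1 hmax
  refine ⟨?_, ?_⟩
  · simp only [List.mem_cons, List.mem_map, List.mem_range] at hmem
    rcases hmem with h | ⟨i, hi, h⟩
    · exact ⟨0, by simp [h]⟩
    · exact ⟨i, by rw [← h, rot_eq_rotate hi.le]⟩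
  · rintro _ ⟨k, rfl⟩
    rcases eq_or_ne s [] with rfl | hs
    · simpa using hle [] (by simp)
    · replace hs := List.length_pos_iff.2 hs
      rw [← List.rotate_mod]
      refine hle _ (List.mem_cons_of_mem _ (List.mem_map.2 ⟨k % s.length, ?_, ?_⟩))
      · exact List.mem_range.2 (Nat.mod_lt _ hs)
      · exact rot_eq_rotate (Nat.mod_lt _ hs).le

theorem rotate_le_maxRot (s : List Bool) (k : ℕ) : s.rotate k ≤ maxRot s :=
  (isGreatest_maxRot s).2 ⟨k, rfl⟩

theorem exists_rotate_eq_maxRot (s : List Bool) : ∃ k, s.rotate k = maxRot s :=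
  (isGreatest_maxRot s).1

theorem rotate_maxRot_le (s : List Bool) (i : ℕ) : (maxRot s).rotate i ≤ maxRot s := by
  obtain ⟨k, hk⟩ := exists_rotate_eq_maxRot s
  have h := rotate_le_maxRot s (k + i)
  rwa [← List.rotate_rotate, hk] at h

theorem length_maxRot (s : List Bool) : (maxRot s).length = s.length := by
  obtain ⟨k, hk⟩ := exists_rotate_eq_maxRot s
  rw [← hk, List.length_rotate]

namespace IsLyndon

variable {s : List Bool}

theorem lt_rotate (hs : IsLyndon s) {i : ℕ} (h0 : 0 < i) (hi : i < s.length) :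
    s < s.rotate i := by
  conv_lhs => rw [← List.take_append_drop (s.length - i) s]
  rw [List.rotate_eq_drop_append_take hi.le]
  exact List.append_lt_append_of_lt_of_length_eq _ _ (by simp) (hs i h0 hi)

theorem le_rotate (hs : IsLyndon s) (k : ℕ) : s ≤ s.rotate k := by
  rcases eq_or_ne s [] with rfl | hne
  · simp
  have hpos := List.length_pos_iff.2 hne
  rw [← List.rotate_mod]
  rcases Nat.eq_zero_or_pos (k % s.length) with h | h
  · rw [h, List.rotate_zero]
  · exact (hs.lt_rotate h (Nat.mod_lt _ hpos)).le

theorem le_rotate_maxRot (hs : IsLyndon s) (j : ℕ) : s ≤ (maxRot s).rotate j := by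
  obtain ⟨k, hk⟩ := exists_rotate_eq_maxRot s
  rw [← hk, List.rotate_rotate]
  exact hs.le_rotate _

theorem rotate_maxRot_lt (hs : IsLyndon s) {i : ℕ} (h0 : 0 < i) (hi : i < s.length) :
    (maxRot s).rotate i < maxRot s := by
  obtain ⟨k, hk⟩ := exists_rotate_eq_maxRot s
  refine lt_of_le_of_ne (rotate_maxRot_le s i) fun h => ?_
  rw [← hk, List.rotate_rotate, add_comm, ← List.rotate_rotate] at h
  exact (hs.lt_rotate h0 hi).ne' (List.rotate_injective k h)

theorem drop_maxRot_lt_take (hs : IsLyndon s) {i : ℕ} (h0 : 0 < i) (hi : i < s.length) :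
    (maxRot s).drop i < (maxRot s).take (s.length - i) := by
  rw [← length_maxRot] at hi ⊢
  exact List.drop_lt_take_of_forall_rotate_lt
    (fun j hj0 hj => hs.rotate_maxRot_lt hj0 (length_maxRot s ▸ hj)) h0 hi

theorem exists_eq_false_cons_append_true (hs : IsLyndon s) (h2 : 2 ≤ s.length) :
    ∃ w, s = false :: w ++ [true] := by
  obtain ⟨x, w, y, rfl⟩ := List.exists_eq_cons_append_singleton h2
  have h := hs (w.length + 1) (by simp) (by simp)
  simp only [List.cons_append, List.length_cons, List.length_append, List.length_nil, zero_add,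
    add_tsub_cancel_left, List.take_succ_cons, List.take_zero, List.drop_succ_cons,
    List.drop_left'] at h
  obtain ⟨rfl, rfl⟩ := Bool.lt_iff.1 ((List.lex_singleton_iff x y).1 h)
  exact ⟨w, rfl⟩

theorem exists_maxRot_eq_true_cons_append_false (hs : IsLyndon s) (h2 : 2 ≤ s.length) :
    ∃ w, maxRot s = true :: w ++ [false] := by
  have h := hs.drop_maxRot_lt_take (i := s.length - 1) (by omega) (by omega)
  obtain ⟨x, w, y, hxy⟩ := List.exists_eq_cons_append_singleton ((length_maxRot s).symm ▸ h2)
  rw [hxy] at h ⊢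
  have hlen := congrArg List.length hxy
  rw [length_maxRot] at hlen
  simp only [List.length_cons, List.length_append, List.length_nil] at hlen
  simp only [hlen, zero_add, add_tsub_cancel_right, List.cons_append, List.drop_succ_cons,
    List.drop_left', add_tsub_cancel_left, List.take_succ_cons, List.take_zero] at h
  obtain ⟨rfl, rfl⟩ := Bool.lt_iff.1 ((List.lex_singleton_iff y x).1 h)
  exact ⟨w, rfl⟩

end IsLyndon

def stem (s : List Bool) : Bool → List Bool
  | true => s.dropLast
  | false => (maxRot s).dropLast

def code (s : List Bool) (c : Bool) : List Bool := c :: stem s c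

def codeWord (s w : List Bool) : List Bool := (w.map (code s)).flatten

theorem length_stem (s : List Bool) (c : Bool) : (stem s c).length = s.length - 1 := by
  cases c <;> simp [stem, length_maxRot]

section codeWord

variable {s : List Bool}

theorem length_code (hs : 0 < s.length) (c : Bool) : (code s c).length = s.length := by
  simp [code, length_stem]; omega

@[simp]
theorem codeWord_nil : codeWord s [] = [] := rfl

@[simp]
theorem codeWord_cons (c : Bool) (w : List Bool) : codeWord s (c :: w) = code s c ++ codeWord s w :=
  rfl

@[simp]
theorem codeWord_append (w₁ w₂ : List Bool) :
    codeWord s (w₁ ++ w₂) = codeWord s w₁ ++ codeWord s w₂ := by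
  simp [codeWord]

theorem length_codeWord (hs : 0 < s.length) (w : List Bool) :
    (codeWord s w).length = w.length * s.length := by
  induction w with
  | nil => simp
  | cons c w ih => simp [length_code hs, ih, Nat.succ_mul, Nat.add_comm]

theorem codeWord_rotate (hs : 0 < s.length) (w : List Bool) (q : ℕ) :
    codeWord s (w.rotate q) = (codeWord s w).rotate (q * s.length) :=
  (List.rotate_flatten_map_mul (length_code hs) w q).symm

theorem rotate_codeWord_cons {t : ℕ} (ht : t < s.length) (c : Bool) (w : List Bool) :
    (codeWord s (c :: w)).rotate (t + 1) =
      (stem s c).drop t ++ codeWord s w ++ c :: (stem s c).take t := by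
  have ht' : t ≤ (stem s c).length := by rw [length_stem]; omega
  rw [List.rotate_eq_drop_append_take (by simp [code]; omega)]
  simp [code, List.drop_append_of_le_length ht', List.take_append_of_le_length ht']

theorem codeWord_lt_codeWord {Y Z : List Bool} (hl : Y.length = Z.length) (h : Y < Z) :
    codeWord s Y < codeWord s Z := by
  induction Y generalizing Z with
  | nil => cases Z <;> simp_all
  | cons c Y ih =>
    obtain ⟨d, Z, rfl⟩ := List.exists_cons_of_length_eq_add_one hl.symm
    cases h with
    | rel hcd =>
      obtain ⟨rfl, rfl⟩ := Bool.lt_iff.1 hcd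
      exact List.Lex.rel hcd
    | cons h => exact List.append_left_lt (ih (by simpa using hl) h)

end codeWord

/-- The factor of length `|s|` of `codeWord s (c₀ :: c₁ :: w)` starting at position `t + 1`. -/
def window (s : List Bool) (c₀ c₁ : Bool) (t : ℕ) : List Bool :=
  (stem s c₀).drop t ++ c₁ :: (stem s c₁).take t

namespace IsLyndon

variable {s : List Bool}

theorem blk_eq (hs : IsLyndon s) (h2 : 2 ≤ s.length) (p c : Bool) :
    blk s (maxRot s) p c = stem s p ++ [c] := by
  obtain ⟨w, hw⟩ := hs.exists_eq_false_cons_append_true h2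
  obtain ⟨z, hz⟩ := hs.exists_maxRot_eq_true_cons_append_false h2
  cases p <;> cases c
  · rw [blk, stem, hz, List.dropLast_concat]
  · rfl
  · rfl
  · rw [blk, stem, hw, List.dropLast_concat]

theorem window_self_le (hs : IsLyndon s) (h2 : 2 ≤ s.length) (c : Bool) {t : ℕ}
    (ht : t < s.length) : window s c c t ≤ maxRot s := by
  have hrot : window s c c t = (blk s (maxRot s) c c).rotate t := by
    rw [hs.blk_eq h2, List.rotate_eq_drop_append_take (by simp [length_stem]; omega),
      List.drop_append_of_le_length (by simp [length_stem]; omega),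
      List.take_append_of_le_length (by simp [length_stem]; omega)]
    simp [window]
  rw [hrot]
  cases c
  · exact rotate_maxRot_le s t
  · exact rotate_le_maxRot s t

theorem window_false_lt_window_true (s : List Bool) (c : Bool) (t : ℕ) :
    window s c false t < window s c true t :=
  List.append_left_lt (List.Lex.rel Bool.false_lt_true)

theorem maxRot_lt_stem_append_true (hs : IsLyndon s) (h2 : 2 ≤ s.length) :
    maxRot s < stem s false ++ [true] := by
  rw [show maxRot s = stem s false ++ [false] from hs.blk_eq h2 false false]
  exact List.append_left_lt (List.Lex.rel Bool.false_lt_true)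

theorem window_false_true_lt (hs : IsLyndon s) (h2 : 2 ≤ s.length) {t : ℕ} (h0 : 0 < t)
    (ht : t < s.length) : window s false true t < stem s false ++ [true] := by
  set P := stem s false
  have hP : P.length = s.length - 1 := length_stem s false
  have ha : maxRot s = P ++ [false] := hs.blk_eq h2 false false
  have hsP : s.take t = (stem s true).take t := by
    conv_lhs => rw [show s = stem s true ++ [true] from hs.blk_eq h2 true true]
    exact List.take_append_of_le_length (by rw [length_stem]; omega)
  have hsuffix : P.drop t ++ [true] ≤ P.take (s.length - t) := by
    have h := hs.drop_maxRot_lt_take h0 ht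
    rw [ha, List.drop_append_of_le_length (by omega),
      List.take_append_of_le_length (by omega)] at h
    exact List.append_true_le_of_append_false_lt (by simp; omega) h
  have hprefix : s.take t < P.drop (s.length - t) ++ [true] := by
    have h := hs.le_rotate_maxRot (s.length - t)
    rw [List.rotate_eq_drop_append_take (by rw [length_maxRot]; omega)] at h
    conv_lhs at h => rw [← List.take_append_drop t s]
    have h' := List.le_of_append_le_append_of_length_eq (by simp [length_maxRot]; omega) h
    rw [ha, List.drop_append_of_le_length (by omega)] at h'
    exact h'.trans_lt (List.append_left_lt (List.Lex.rel Bool.false_lt_true))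
  calc window s false true t = (P.drop t ++ [true]) ++ s.take t := by simp [window, hsP, P]
    _ < P.take (s.length - t) ++ (P.drop (s.length - t) ++ [true]) :=
      List.append_lt_append_of_length_eq (by simp; omega) hsuffix hprefix
    _ = P ++ [true] := by rw [← List.append_assoc, List.take_append_drop]

theorem window_lt (hs : IsLyndon s) (h2 : 2 ≤ s.length) {c₀ c₁ : Bool} {t : ℕ}
    (ht : t < s.length) (h : ¬(c₀ = false ∧ c₁ = true ∧ t = 0)) :
    window s c₀ c₁ t < stem s false ++ [true] := by
  have hlt := hs.maxRot_lt_stem_append_true h2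
  cases c₀ <;> cases c₁
  · exact (hs.window_self_le h2 false ht).trans_lt hlt
  · exact hs.window_false_true_lt h2 (Nat.pos_of_ne_zero (by simpa using h)) ht
  · exact (window_false_lt_window_true s true t).trans <|
      (hs.window_self_le h2 true ht).trans_lt hlt
  · exact (hs.window_self_le h2 true ht).trans_lt hlt

theorem cons_flatten_map_zip (hs : IsLyndon s) (h2 : 2 ≤ s.length) (c : Bool) (w : List Bool)
    (d : Bool) :
    c :: (((c :: w ++ [d]).zip (w ++ [d])).map fun p => blk s (maxRot s) p.1 p.2).flatten =
      codeWord s (c :: w) ++ [d] := by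
  induction w generalizing c with
  | nil => simp [hs.blk_eq h2, code]
  | cons e w ih =>
    have h := ih e
    simp only [List.cons_append, List.zip_cons_cons, List.map_cons, List.flatten_cons] at h ⊢
    rw [hs.blk_eq h2 c e, codeWord_cons, List.append_assoc (code s c), ← h]
    simp [code]

theorem substWord_cons_append (hs : IsLyndon s) (h2 : 2 ≤ s.length) (c : Bool)
    (w : List Bool) (d : Bool) :
    substWord s (c :: w ++ [d]) = stem s (!c) ++ codeWord s (c :: w) ++ [d] := by
  rw [List.append_assoc, ← hs.cons_flatten_map_zip h2,
    ← List.singleton_append (l := List.flatten _), ← List.append_assoc, ← hs.blk_eq h2]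
  rfl

theorem codeWord_isRotated_substWord (hs : IsLyndon s) (h2 : 2 ≤ s.length) (c : Bool)
    (w : List Bool) : codeWord s (c :: w ++ [!c]) ~r substWord s (c :: w ++ [!c]) := by
  have hcode : codeWord s (c :: w ++ [!c]) = (codeWord s (c :: w) ++ [!c]) ++ stem s (!c) := by
    simp [code]
  rw [hcode, hs.substWord_cons_append h2, List.append_assoc (stem s !c)]
  exact List.isRotated_append

theorem rotate_codeWord_le_substWord (hs : IsLyndon s) (h2 : 2 ≤ s.length) {v z : List Bool}
    (hlen : v.length = z.length + 2) (hv : v.rotate 1 ≤ true :: z ++ [false]) {t : ℕ}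
    (ht : t < s.length) :
    (codeWord s v).rotate (t + 1) ≤ substWord s (true :: z ++ [false]) := by
  rcases v with _ | ⟨c₀, _ | ⟨c₁, w⟩⟩ <;>
    simp only [List.length_cons, List.length_nil] at hlen
  · omega
  · omega
  replace hlen : w.length = z.length := by omega
  rw [rotate_codeWord_cons ht, hs.substWord_cons_append h2, Bool.not_true]
  by_cases hB : c₀ = false ∧ c₁ = true ∧ t = 0
  · obtain ⟨rfl, rfl, rfl⟩ := hB
    have hwz : true :: w ≤ true :: z :=
      List.le_of_append_le_append_of_length_eq (by simp [hlen]) (by simpa using hv)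
    rcases hwz.lt_or_eq with hlt | heq
    · simp only [List.drop_zero, List.take_zero, List.append_assoc]
      refine (List.append_left_lt (List.append_lt_append_of_lt_of_length_eq _ _ ?_ ?_)).le
      · simp [length_codeWord (by omega : 0 < s.length), hlen]
      · exact codeWord_lt_codeWord (by simp [hlen]) hlt
    · simp [heq]
  · have hX : (stem s c₀).drop t ++ codeWord s (c₁ :: w) ++ c₀ :: (stem s c₀).take t =
        window s c₀ c₁ t ++
          ((stem s c₁).drop t ++ codeWord s w ++ c₀ :: (stem s c₀).take t) := by
      rw [codeWord_cons, code, window]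
      conv_lhs => rw [← List.take_append_drop t (stem s c₁)]
      simp only [List.cons_append, List.append_assoc]
    have hM : stem s false ++ codeWord s (true :: z) ++ [false] =
        (stem s false ++ [true]) ++ (stem s true ++ codeWord s z ++ [false]) := by
      simp [code]
    rw [hX, hM]
    refine (List.append_lt_append_of_lt_of_length_eq _ _ ?_ (hs.window_lt h2 ht hB)).le
    simp [window, length_stem]
    omega

end IsLyndon

/-- For Lyndon words `s, r` of length at least 2, `L(s • r) = s • L(r)`. -/
theorem stmt8 (s r : List Bool) (hs : 2 ≤ s.length) (hr : 2 ≤ r.length)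
    (hLs : IsLyndon s) (hLr : IsLyndon r) :
    maxRot (substWord s r) = substWord s (maxRot r) := by
  obtain ⟨r', hr'⟩ := hLr.exists_eq_false_cons_append_true hr
  obtain ⟨z, hz⟩ := hLr.exists_maxRot_eq_true_cons_append_false hr
  have hm : 0 < s.length := by omega
  have hC : codeWord s r ~r substWord s r := hr' ▸ hLs.codeWord_isRotated_substWord hs false r'
  have hM : codeWord s r ~r substWord s (maxRot r) := by
    obtain ⟨k, hk⟩ := exists_rotate_eq_maxRot r
    refine .trans ⟨k * s.length, ?_⟩ (hz ▸ hLs.codeWord_isRotated_substWord hs true z)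
    rw [← codeWord_rotate hm, hk, hz]
  refine (isGreatest_maxRot _).unique ⟨hC.symm.trans hM, ?_⟩
  rintro _ hX
  obtain ⟨j, rfl⟩ := hC.trans hX
  obtain ⟨q, t, ht, hj⟩ := (codeWord s r).exists_rotate_eq_rotate_mul_add_one hm j
  rw [hj, ← codeWord_rotate hm, hz]
  refine hLs.rotate_codeWord_le_substWord hs ?_ ?_ ht
  · simpa [hz] using (length_maxRot r).symm
  · rw [List.rotate_rotate, ← hz]
    exact rotate_le_maxRot r _
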